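/- arXiv:1512.01764 — 2 statements merged into one kernel-verified Lean document; each statement's English description precedes it below -/
import Mathlib

section
/- Let G = (V, E) be a finite simple undirected graph, let k ≥ 1 be an integer, and define ν₂ : 2^V → ℝ by ν₂(C) = |{u ∈ V : u ∈ C or |N(u) ∩ C| ≥ k}| (so ν₂(∅) = 0). Then for every v ∈ V, the Shapley value of v in the game (V, ν₂) equals min(1, k/(1 + deg(v))) + Σ_{u ∈ N(v)} max(0, (deg(u) − k + 1) / (deg(u)·(1 + deg(u)))). -/
/-!
The value of a coalition counts the vertices that lie in it or have at least `k` neighbours in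
it, so the game is the sum over `u` of the single-vertex games `activationGame G k u`, and the
Shapley value is additive. The marginal contribution of `v` to the game of `u` depends only on the
trace of the coalition on a small set `S`: `S = N(v)` for `u = v`, `S = (N(u) \ {v}) ∪ {u}` for a
neighbour `u`, and it vanishes for every other `u`. The Shapley weights are consistent under such
a restriction: summing the weights `w(n, c) = c! (n - c - 1)! / n!` over the coalitions with a
fixed trace `B` on `S` gives the weight of `B` in the game with player set `S ∪ {v}`; adding the
players outside `S` one at a time, this is the identity `w(n + 1, c) + w(n + 1, c + 1) = w(n, c)`. What is left is
counting subsets of `S` by size: for `u = v` every size below `k` contributes `1 / (1 + deg v)`,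
and for a neighbour `u` exactly the `(k - 1)`-subsets of `N(u) \ {v}` contribute.
-/

open Finset

/-- The Shapley value of player `i` in the coalitional game with characteristic
function `ν` on the finite player set `α`. -/
noncomputable def shapley {α : Type*} [Fintype α] [DecidableEq α]
    (ν : Finset α → ℝ) (i : α) : ℝ :=
  ∑ C ∈ (Finset.univ.erase i).powerset,
    ((C.card.factorial * (Fintype.card α - C.card - 1).factorial : ℝ) /
        ((Fintype.card α).factorial : ℝ)) * (ν (insert i C) - ν C)

noncomputable def shapleyWeight (n c : ℕ) : ℝ :=
  (c.factorial * (n - c - 1).factorial : ℝ) / (n.factorial : ℝ)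

theorem shapleyWeight_add_add_one (c d : ℕ) :
    shapleyWeight (c + d + 1) c
      = (c.factorial * d.factorial : ℝ) / ((c + d + 1).factorial : ℝ) := by
  rw [shapleyWeight, show c + d + 1 - c - 1 = d by omega]

theorem shapleyWeight_succ_add_shapleyWeight_succ {m c : ℕ} (h : c < m) :
    shapleyWeight (m + 1) c + shapleyWeight (m + 1) (c + 1) = shapleyWeight m c := by
  obtain ⟨d, rfl⟩ := Nat.exists_eq_add_of_lt h
  rw [show c + d + 1 + 1 = c + (d + 1) + 1 by ring, shapleyWeight_add_add_one c (d + 1),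
    show c + (d + 1) + 1 = c + 1 + d + 1 by ring, shapleyWeight_add_add_one (c + 1) d,
    shapleyWeight_add_add_one]
  simp only [Nat.factorial_succ, show c + 1 + d + 1 = c + d + 1 + 1 by ring]
  push_cast
  field_simp
  ring

theorem choose_mul_shapleyWeight_succ {d m : ℕ} (h : m ≤ d) :
    (d.choose m : ℝ) * shapleyWeight (d + 1) m = 1 / (d + 1) := by
  obtain ⟨e, rfl⟩ := Nat.exists_eq_add_of_le h
  rw [shapleyWeight_add_add_one, Nat.cast_add_choose, Nat.factorial_succ]
  push_cast
  field_simp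

theorem choose_mul_shapleyWeight_add_two {p j : ℕ} (h : j ≤ p) :
    (p.choose j : ℝ) * shapleyWeight (p + 2) j = (p + 1 - j) / ((p + 1) * (p + 2)) := by
  obtain ⟨e, rfl⟩ := Nat.exists_eq_add_of_le h
  rw [show j + e + 2 = j + (e + 1) + 1 by ring, shapleyWeight_add_add_one,
    Nat.cast_add_choose, show j + (e + 1) + 1 = j + e + 1 + 1 by ring]
  simp only [Nat.factorial_succ]
  push_cast
  field_simp
  ring

theorem sum_powerset_shapleyWeight_mul_inter {α : Type*} [DecidableEq α] (f : Finset α → ℝ)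
    {S T : Finset α} (hST : S ⊆ T) :
    ∑ C ∈ T.powerset, shapleyWeight (#T + 1) #C * f (C ∩ S)
      = ∑ B ∈ S.powerset, shapleyWeight (#S + 1) #B * f B := by
  obtain ⟨R, hSR, rfl⟩ : ∃ R, Disjoint S R ∧ T = S ∪ R :=
    ⟨T \ S, disjoint_sdiff, (union_sdiff_of_subset hST).symm⟩
  clear hST
  induction R using Finset.induction_on with
  | empty =>
    rw [union_empty]
    exact sum_congr rfl fun C hC => by rw [inter_eq_left.2 (mem_powerset.1 hC)]
  | insert x R hxR ih =>
    have hxS : x ∉ S := disjoint_right.1 hSR (mem_insert_self x R)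
    have hx : x ∉ S ∪ R := by simp [hxS, hxR]
    rw [union_insert, sum_powerset_insert hx, card_insert_of_notMem hx,
      ← ih (disjoint_of_subset_right (subset_insert x R) hSR), ← sum_add_distrib]
    refine sum_congr rfl fun C hC => ?_
    have hCsub := mem_powerset.1 hC
    rw [insert_inter_of_notMem hxS, card_insert_of_notMem (fun h => hx (hCsub h)), ← add_mul,
      shapleyWeight_succ_add_shapleyWeight_succ (Nat.lt_succ_of_le (card_le_card hCsub))]

theorem sum_powerset_shapleyWeight_mul_card_lt {α : Type*} (S : Finset α) (k : ℕ) :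
    ∑ B ∈ S.powerset, shapleyWeight (#S + 1) #B * (if #B < k then 1 else 0)
      = min 1 ((k : ℝ) / (1 + #S)) := by
  rw [sum_powerset_apply_card (fun m => shapleyWeight (#S + 1) m * if m < k then 1 else 0)]
  have hterm : ∀ m ∈ range (#S + 1), (#S).choose m • (shapleyWeight (#S + 1) m *
      (if m < k then 1 else 0)) = if m < k then (1 : ℝ) / (#S + 1) else 0 := fun m hm => by
    rw [nsmul_eq_mul, ← mul_assoc,
      choose_mul_shapleyWeight_succ (Nat.lt_succ_iff.1 (mem_range.1 hm)), mul_ite, mul_one,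
      mul_zero]
  rw [sum_congr rfl hterm, sum_ite, sum_const_zero, add_zero, sum_const, nsmul_eq_mul,
    show (range (#S + 1)).filter (· < k) = range (min k (#S + 1)) by ext; simp; omega,
    card_range]
  have hS : (0 : ℝ) < #S + 1 := by positivity
  calc ((min k (#S + 1) : ℕ) : ℝ) * (1 / (#S + 1)) = min (k : ℝ) (#S + 1) / (#S + 1) := by
        push_cast; ring
    _ = min 1 ((k : ℝ) / (1 + #S)) := by
        rw [← min_div_div_right hS.le, div_self hS.ne', min_comm, add_comm (1 : ℝ)]

theorem sum_powerset_shapleyWeight_mul_card_add_one_eq {α : Type*} (P : Finset α) {k : ℕ}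
    (hk : 1 ≤ k) :
    ∑ B ∈ P.powerset, shapleyWeight (#P + 2) #B * (if #B + 1 = k then 1 else 0)
      = max 0 (((#P + 1 : ℝ) - k + 1) / ((#P + 1) * (1 + (#P + 1)))) := by
  obtain ⟨j, rfl⟩ := Nat.exists_eq_add_of_le' hk
  simp only [add_left_inj]
  rw [sum_powerset_apply_card (fun m => shapleyWeight (#P + 2) m * if m = j then 1 else 0)]
  simp only [mul_ite, mul_one, mul_zero, smul_ite, smul_zero, sum_ite_eq', mem_range]
  split_ifs with hj
  · rw [nsmul_eq_mul, choose_mul_shapleyWeight_add_two (Nat.lt_succ_iff.1 hj), max_eq_right]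
    · push_cast
      ring
    · have hjP : (j : ℝ) ≤ #P := by exact_mod_cast Nat.lt_succ_iff.1 hj
      push_cast
      apply div_nonneg <;> [linarith; positivity]
  · have hPj : (#P : ℝ) + 1 ≤ j := by exact_mod_cast not_lt.1 hj
    rw [max_eq_left]
    push_cast
    apply div_nonpos_of_nonpos_of_nonneg <;> [linarith; positivity]

section Shapley

variable {α : Type*} [Fintype α] [DecidableEq α]

theorem shapley_sum {ι : Type*} (s : Finset ι) (ν : ι → Finset α → ℝ) (i : α) :
    shapley (fun C => ∑ j ∈ s, ν j C) i = ∑ j ∈ s, shapley (ν j) i := by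
  simp only [shapley, ← sum_sub_distrib, mul_sum]
  exact sum_comm

theorem shapley_eq_sum_powerset_of_marginal {ν : Finset α → ℝ} {i : α} {S : Finset α}
    (hS : S ⊆ univ.erase i) (f : Finset α → ℝ)
    (hν : ∀ C, i ∉ C → ν (insert i C) - ν C = f (C ∩ S)) :
    shapley ν i = ∑ B ∈ S.powerset, shapleyWeight (#S + 1) #B * f B := by
  have hcard : #(univ.erase i) + 1 = Fintype.card α := by
    rw [card_erase_of_mem (mem_univ i), card_univ,
      Nat.sub_add_cancel (Fintype.card_pos_iff.2 ⟨i⟩)]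
  rw [← sum_powerset_shapleyWeight_mul_inter f hS, hcard, shapley]
  refine sum_congr rfl fun C hC => ?_
  rw [hν C fun hi => by simpa using mem_powerset.1 hC hi]
  rfl

end Shapley

section InfluenceGame

variable {V : Type*} [Fintype V] [DecidableEq V] (G : SimpleGraph V) [DecidableRel G.Adj]
  (k : ℕ)

theorem SimpleGraph.neighborFinset_subset_erase_self (v : V) :
    G.neighborFinset v ⊆ univ.erase v :=
  subset_erase.2 ⟨subset_univ _, G.notMem_neighborFinset_self v⟩

noncomputable def activationGame (u : V) (C : Finset V) : ℝ :=
  if u ∈ C ∨ k ≤ #(G.neighborFinset u ∩ C) then 1 else 0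

theorem shapley_activationGame_self (v : V) :
    shapley (activationGame G k v) v = min 1 ((k : ℝ) / (1 + G.degree v)) := by
  rw [shapley_eq_sum_powerset_of_marginal (G.neighborFinset_subset_erase_self v)
    (fun B => if #B < k then 1 else 0), ← G.card_neighborFinset_eq_degree,
    sum_powerset_shapleyWeight_mul_card_lt]
  intro C hvC
  simp only [activationGame, mem_insert_self, true_or, if_true, hvC, false_or, inter_comm C]
  split_ifs <;> first | omega | norm_num

theorem activationGame_insert_sub_of_adj {u v : V} (huv : G.Adj v u) {C : Finset V}
    (hvC : v ∉ C) :
    activationGame G k u (insert v C) - activationGame G k u C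
      = if u ∉ C ∧ #(G.neighborFinset u ∩ C) + 1 = k then 1 else 0 := by
  have hvN : v ∈ G.neighborFinset u := (G.mem_neighborFinset u v).2 huv.symm
  have hcard : #(G.neighborFinset u ∩ insert v C) = #(G.neighborFinset u ∩ C) + 1 := by
    rw [inter_insert_of_mem hvN, card_insert_of_notMem fun h => hvC (mem_inter.1 h).2]
  by_cases hu : u ∈ C
  · simp [activationGame, hu]
  · simp only [activationGame, mem_insert, huv.ne', hu, hcard, false_or, not_false_eq_true,
      true_and]
    split_ifs <;> first | omega | norm_num

theorem shapley_activationGame_of_adj (hk : 1 ≤ k) {u v : V} (huv : G.Adj v u) :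
    shapley (activationGame G k u) v
      = max 0 (((G.degree u : ℝ) - k + 1) / (G.degree u * (1 + G.degree u))) := by
  set P := (G.neighborFinset u).erase v with hP
  have hvN : v ∈ G.neighborFinset u := (G.mem_neighborFinset u v).2 huv.symm
  have huP : u ∉ P := fun h => G.notMem_neighborFinset_self u (mem_of_mem_erase h)
  have hPN : P ⊆ G.neighborFinset u := erase_subset v _
  have hdeg : (G.degree u : ℝ) = #P + 1 := by
    rw [hP, card_erase_of_mem hvN, Nat.cast_sub (card_pos.2 ⟨v, hvN⟩),
      G.card_neighborFinset_eq_degree]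
    ring
  have hS : insert u P ⊆ univ.erase v :=
    insert_subset (mem_erase.2 ⟨huv.ne', mem_univ u⟩) fun x hx => mem_erase.2
      ⟨ne_of_mem_erase hx, mem_univ x⟩
  rw [shapley_eq_sum_powerset_of_marginal hS
    (fun B => if u ∉ B ∧ #(G.neighborFinset u ∩ B) + 1 = k then 1 else 0)]
  · have hwith_u : ∀ B ∈ P.powerset, shapleyWeight (#P + 1 + 1) #(insert u B)
        * (if u ∉ insert u B ∧ #(G.neighborFinset u ∩ insert u B) + 1 = k then 1 else 0) = 0 :=
      fun B _ => by simp
    have hwithout_u : ∀ B ∈ P.powerset,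
        (if u ∉ B ∧ #(G.neighborFinset u ∩ B) + 1 = k then (1 : ℝ) else 0)
          = if #B + 1 = k then 1 else 0 := fun B hB => by
      have hBP := mem_powerset.1 hB
      have huB : u ∉ B := fun h => huP (hBP h)
      rw [inter_eq_right.2 (hBP.trans hPN)]
      simp only [huB, not_false_eq_true, true_and]
    rw [sum_powerset_insert huP, card_insert_of_notMem huP, sum_eq_zero hwith_u, add_zero,
      sum_congr rfl fun B hB => by rw [hwithout_u B hB],
      sum_powerset_shapleyWeight_mul_card_add_one_eq P hk, hdeg]
  intro C hvC
  have hNC : G.neighborFinset u ∩ (C ∩ insert u P) = G.neighborFinset u ∩ C := by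
    ext x
    simp only [hP, mem_inter, mem_insert, mem_erase]
    exact ⟨fun h => ⟨h.1, h.2.1⟩,
      fun h => ⟨h.1, h.2, Or.inr ⟨ne_of_mem_of_not_mem h.2 hvC, h.1⟩⟩⟩
  simp only [activationGame_insert_sub_of_adj G k huv hvC, hNC, mem_inter, mem_insert_self,
    and_true]

theorem shapley_activationGame_of_not_adj {u v : V} (huv : u ≠ v) (hadj : ¬ G.Adj v u) :
    shapley (activationGame G k u) v = 0 := by
  rw [shapley_eq_sum_powerset_of_marginal (empty_subset _) (fun _ => 0)]
  · simp
  intro C hvC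
  have hvN : v ∉ G.neighborFinset u := by simpa [G.adj_comm] using hadj
  simp only [activationGame, mem_insert, huv, false_or, inter_insert_of_notMem hvN, sub_self]

end InfluenceGame

/-- For the game where the value of coalition `C` is the number of nodes that are in
`C` or have at least `k` neighbours in `C`, the Shapley value of `v` equals
`min(1, k/(1+deg v)) + Σ_{u ∈ N(v)} max(0, (deg u − k + 1)/(deg u·(1+deg u)))`. -/
theorem shapley_k_influence_game {V : Type*} [Fintype V] [DecidableEq V]
    (G : SimpleGraph V) [DecidableRel G.Adj] (k : ℕ) (hk : 1 ≤ k)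
    (ν : Finset V → ℝ)
    (hν : ∀ C : Finset V,
      ν C = ((Finset.univ.filter
        (fun u => u ∈ C ∨ k ≤ (G.neighborFinset u ∩ C).card)).card : ℝ))
    (v : V) :
    shapley ν v
      = min 1 ((k : ℝ) / (1 + (G.degree v : ℝ)))
        + ∑ u ∈ G.neighborFinset v,
            max 0 (((G.degree u : ℝ) - (k : ℝ) + 1)
              / ((G.degree u : ℝ) * (1 + (G.degree u : ℝ)))) := by
  have hν_sum : ν = fun C => ∑ u, activationGame G k u C :=
    funext fun C => by rw [hν, natCast_card_filter]; rfl
  rw [hν_sum, shapley_sum, ← add_sum_erase _ _ (mem_univ v), shapley_activationGame_self,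
    ← sum_subset (G.neighborFinset_subset_erase_self v) fun u hu hnu =>
      shapley_activationGame_of_not_adj G k (ne_of_mem_erase hu) (by simpa using hnu)]
  exact congrArg _ (sum_congr rfl fun u hu =>
    shapley_activationGame_of_adj G k hk ((G.mem_neighborFinset v u).1 hu))
end

section
/- Let G = (V, E) be a finite simple undirected graph, let f : V → ℝ, and let CS = {C_1, …, C_m} be a partition of V. Define ν(C) = Σ_{u ∈ N(C)} f(u) for C ⊆ V, where N(C) = (⋃_{c∈C} N(c)) ∖ C. For u ∈ V, let deg_CS(u) be the number of parts of CS other than the part containing u that contain at least one neighbour of u. Fix j ∈ {1, …, m} and v ∈ C_j, and for u ∈ V let deg_j(u) = |N(u) ∩ C_j|. For R ⊆ {1, …, m}, let Q_R = ⋃_{r∈R} C_r. Fix integers 0 ≤ k ≤ m−1 and 0 ≤ l ≤ |C_j|−1. Then the average of ν(Q_T ∪ C ∪ {v}) − ν(Q_T ∪ C), taken over all pairs (T, C) with T ⊆ {1, …, m}∖{j}, |T| = k and C ⊆ C_j∖{v}, |C| = l, equals Σ_{u ∈ N(v) ∩ C_j} f(u)·C(m−1−deg_CS(u), k)·C(|C_j|−1−deg_j(u),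 l) / (C(m−1, k)·C(|C_j|−1, l)) + Σ_{u ∈ N(v) ∖ C_j} f(u)·C(m−1−deg_CS(u), k)·C(|C_j|−deg_j(u), l) / (C(m−1, k)·C(|C_j|−1, l)) − f(v)·(1 − C(m−1−deg_CS(v), k)·C(|C_j|−1−deg_j(v), l) / (C(m−1, k)·C(|C_j|−1, l))), where C(a, b) denotes the binomial coefficient with the convention C(a, b) = 0 whenever a < b. -/
/-!
Adding `v` to a coalition `Q ∌ v` adds to `N(Q)` exactly the neighbours `u` of `v` whose closed
neighbourhood `N[u]` misses `Q`, and removes `v` from `N(Q)` unless `N[v]` misses `Q`. Averaging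
over `Q = Q_T ∪ C` thus reduces to counting the pairs `(T, C)` with `Q_T ∪ C` disjoint from `N[u]`:
a `k`-set of communities missing `N[u]` times an `l`-subset of `C_j ∖ N[u]`. For `u ∈ N[v]` the
set `N[u]` meets `C_j` and exactly `1 + deg_CS(u)` communities in all, while
`|C_j ∖ N[u]| = |C_j| - deg_j(u) - [u ∈ C_j]`; these give the binomial coefficients.
-/

open Finset SimpleGraph

namespace Finset

variable {α : Type*}

theorem filter_powersetCard_forall (p : α → Prop) [DecidablePred p]
    (s : Finset α) (k : ℕ) :
    {T ∈ s.powersetCard k | ∀ x ∈ T, p x} = (s.filter p).powersetCard k := by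
  ext T
  simp only [mem_filter, mem_powersetCard, subset_iff]
  grind

theorem erase_sdiff_of_mem [DecidableEq α] {s t : Finset α} {a : α}
    (ha : a ∈ t) : s.erase a \ t = s \ t := by
  rw [erase_sdiff_comm, erase_eq_of_notMem (notMem_sdiff_of_mem_right ha)]

theorem sum_powersetCard_ite_disjoint_biUnion_union {R : Type*} [DecidableEq α]
    [CommSemiring R] (A : Finset (Finset α)) (S B : Finset α) (k l : ℕ) :
    ∑ T ∈ A.powersetCard k, ∑ C ∈ S.powersetCard l,
        (if Disjoint B (T.biUnion id ∪ C) then (1 : R) else 0)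
      = (Nat.choose #{P ∈ A | Disjoint B P} k : R) * (Nat.choose #(S \ B) l : R) := by
  have hsplit : ∀ (T : Finset (Finset α)) (C : Finset α),
      (if Disjoint B (T.biUnion id ∪ C) then (1 : R) else 0)
        = (if Disjoint B (T.biUnion id) then 1 else 0) * (if Disjoint B C then 1 else 0) := by
    intro T C
    simp only [disjoint_union_right, ite_zero_mul_ite_zero, mul_one]
  simp only [hsplit, ← sum_mul_sum, sum_boole]
  simp only [disjoint_biUnion_right, id_eq, filter_powersetCard_forall, card_powersetCard]
  simp only [Finset.disjoint_right (s := B), filter_powersetCard_forall, filter_notMem_eq_sdiff,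
    card_powersetCard]

end Finset

namespace SimpleGraph

variable {V : Type*} [DecidableEq V] (G : SimpleGraph V) [Fintype V] [DecidableRel G.Adj]

def closedNeighborFinset (u : V) : Finset V := insert u (G.neighborFinset u)

def groupNeighborFinset (S : Finset V) : Finset V := S.biUnion (fun c => G.neighborFinset c) \ S

variable {G}

theorem disjoint_closedNeighborFinset_iff {u : V} {S : Finset V} :
    Disjoint (G.closedNeighborFinset u) S ↔ u ∉ S ∧ ∀ w ∈ S, ¬ G.Adj u w := by
  rw [closedNeighborFinset, disjoint_insert_left, Finset.disjoint_left]
  simp only [mem_neighborFinset]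
  grind

theorem self_mem_closedNeighborFinset (u : V) : u ∈ G.closedNeighborFinset u :=
  mem_insert_self u _

theorem mem_closedNeighborFinset_of_adj {u w : V} (h : G.Adj u w) :
    u ∈ G.closedNeighborFinset w :=
  mem_insert_of_mem ((G.mem_neighborFinset w u).2 h.symm)

theorem mem_groupNeighborFinset {u : V} {S : Finset V} :
    u ∈ G.groupNeighborFinset S ↔ u ∉ S ∧ ∃ w ∈ S, G.Adj u w := by
  simp only [groupNeighborFinset, mem_sdiff, mem_biUnion, mem_neighborFinset, adj_comm]
  tauto

theorem groupNeighborFinset_insert (v : V) (Q : Finset V) :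
    G.groupNeighborFinset (insert v Q) = (G.groupNeighborFinset Q).erase v ∪
      {u ∈ G.neighborFinset v | Disjoint (G.closedNeighborFinset u) Q} := by
  ext u
  simp only [mem_union, mem_erase, mem_filter, mem_groupNeighborFinset, mem_neighborFinset,
    disjoint_closedNeighborFinset_iff, mem_insert]
  grind [adj_comm, Adj.ne]

theorem disjoint_groupNeighborFinset_erase {v : V} {Q : Finset V} :
    Disjoint ((G.groupNeighborFinset Q).erase v)
      {u ∈ G.neighborFinset v | Disjoint (G.closedNeighborFinset u) Q} := by
  rw [Finset.disjoint_left]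
  simp only [mem_erase, mem_filter, mem_groupNeighborFinset, disjoint_closedNeighborFinset_iff]
  grind

theorem sum_groupNeighborFinset_insert_sub {R : Type*} [CommRing R] (f : V → R) {v : V}
    {Q : Finset V} (hvQ : v ∉ Q) :
    ∑ u ∈ G.groupNeighborFinset (insert v Q), f u - ∑ u ∈ G.groupNeighborFinset Q, f u =
      ∑ u ∈ G.neighborFinset v, f u * (if Disjoint (G.closedNeighborFinset u) Q then 1 else 0)
        - f v * (1 - if Disjoint (G.closedNeighborFinset v) Q then 1 else 0) := by
  have hv : v ∈ G.groupNeighborFinset Q ↔ ¬ Disjoint (G.closedNeighborFinset v) Q := by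
    rw [mem_groupNeighborFinset, disjoint_closedNeighborFinset_iff]
    grind
  rw [groupNeighborFinset_insert, sum_union disjoint_groupNeighborFinset_erase, sum_filter]
  simp only [mul_boole]
  by_cases hvd : Disjoint (G.closedNeighborFinset v) Q
  · rw [erase_eq_of_notMem (hv.not_left.2 hvd), if_pos hvd]
    ring
  · rw [← add_sum_erase _ _ (hv.2 hvd), if_neg hvd]
    ring

theorem sum_powersetCard_sum_groupNeighborFinset_insert_sub {R : Type*} [CommRing R]
    (f : V → R) (A : Finset (Finset V)) (S : Finset V) (k l : ℕ) {v : V}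
    (hvA : ∀ P ∈ A, v ∉ P) (hvS : v ∉ S) :
    ∑ T ∈ A.powersetCard k, ∑ C ∈ S.powersetCard l,
        (∑ u ∈ G.groupNeighborFinset (insert v (T.biUnion id ∪ C)), f u
          - ∑ u ∈ G.groupNeighborFinset (T.biUnion id ∪ C), f u)
      = ∑ u ∈ G.neighborFinset v, f u *
          ((Nat.choose #{P ∈ A | Disjoint (G.closedNeighborFinset u) P} k : R)
            * (Nat.choose #(S \ G.closedNeighborFinset u) l : R))
        - f v * ((Nat.choose #A k : R) * (Nat.choose #S l : R)
          - (Nat.choose #{P ∈ A | Disjoint (G.closedNeighborFinset v) P} k : R)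
            * (Nat.choose #(S \ G.closedNeighborFinset v) l : R)) := by
  have hv : ∀ T ∈ A.powersetCard k, ∀ C ∈ S.powersetCard l, v ∉ T.biUnion id ∪ C := by
    simp only [mem_powersetCard, mem_union, mem_biUnion, id]
    grind
  rw [sum_congr rfl fun T hT => sum_congr rfl fun C hC =>
    sum_groupNeighborFinset_insert_sub f (hv T hT C hC)]
  simp only [sum_sub_distrib, ← mul_sum, mul_sub, mul_one]
  rw [sum_congr rfl fun T _ => sum_comm, sum_comm]
  simp only [← mul_sum, sum_powersetCard_ite_disjoint_biUnion_union, sum_const, card_powersetCard,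
    nsmul_eq_mul]
  ring

theorem card_filter_disjoint_closedNeighborFinset {CS : Finset (Finset V)}
    (hdisj : ∀ P ∈ CS, ∀ Q ∈ CS, P ≠ Q → Disjoint P Q) {u : V} (hu : ∃ P ∈ CS, u ∈ P) :
    #{P ∈ CS | Disjoint (G.closedNeighborFinset u) P}
      = #CS - 1 - #{P ∈ CS | u ∉ P ∧ ∃ w ∈ P, G.Adj u w} := by
  obtain ⟨Pu, hPu, huPu⟩ := hu
  have hPu_unique : ∀ P ∈ CS, u ∈ P → P = Pu := fun P hP huP =>
    by_contra fun hne => Finset.disjoint_left.1 (hdisj P hP Pu hPu hne) huP huPu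
  have hmeet : {P ∈ CS | ¬ Disjoint (G.closedNeighborFinset u) P}
      = insert Pu {P ∈ CS | u ∉ P ∧ ∃ w ∈ P, G.Adj u w} := by
    ext P
    simp only [mem_filter, mem_insert, disjoint_closedNeighborFinset_iff]
    grind
  have hsplit := card_filter_add_card_filter_not (s := CS)
    (fun P => Disjoint (G.closedNeighborFinset u) P)
  rw [hmeet, card_insert_of_notMem (by simp [huPu])] at hsplit
  omega

theorem card_sdiff_closedNeighborFinset_of_mem {S : Finset V} {u : V} (hu : u ∈ S) :
    #(S \ G.closedNeighborFinset u) = #S - 1 - #(G.neighborFinset u ∩ S) := by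
  rw [card_sdiff, closedNeighborFinset, insert_inter_of_mem hu,
    card_insert_of_notMem (fun h => notMem_neighborFinset_self G u (mem_inter.1 h).1)]
  omega

theorem card_sdiff_closedNeighborFinset_of_notMem {S : Finset V} {u : V} (hu : u ∉ S) :
    #(S \ G.closedNeighborFinset u) = #S - #(G.neighborFinset u ∩ S) := by
  rw [card_sdiff, closedNeighborFinset, insert_inter_of_notMem hu]

end SimpleGraph

theorem owen_degree_expected_marginal_contribution_general {V : Type*} [Fintype V] [DecidableEq V]
    (G : SimpleGraph V) [DecidableRel G.Adj] (f : V → ℝ)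
    (CS : Finset (Finset V))
    (hdisj : ∀ P ∈ CS, ∀ Q ∈ CS, P ≠ Q → Disjoint P Q)
    (hcover : ∀ u : V, ∃ P ∈ CS, u ∈ P)
    (ν : Finset V → ℝ)
    (hν : ∀ C : Finset V, ν C = ∑ u ∈ C.biUnion (fun c => G.neighborFinset c) \ C, f u)
    (degCS : V → ℕ)
    (hdegCS : ∀ u : V,
      degCS u = (CS.filter (fun P => u ∉ P ∧ ∃ w ∈ P, G.Adj u w)).card)
    (Cj : Finset V) (hCj : Cj ∈ CS) (v : V) (hv : v ∈ Cj)
    (degj : V → ℕ) (hdegj : ∀ u : V, degj u = (G.neighborFinset u ∩ Cj).card)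
    (m : ℕ) (hm : m = CS.card)
    (k l : ℕ) (hk : k ≤ m - 1) (hl : l ≤ Cj.card - 1) :
    (∑ T ∈ (CS.erase Cj).powersetCard k, ∑ C ∈ (Cj.erase v).powersetCard l,
        (ν (insert v (T.biUnion id ∪ C)) - ν (T.biUnion id ∪ C)))
      / ((Nat.choose (m - 1) k : ℝ) * (Nat.choose (Cj.card - 1) l : ℝ))
    = (∑ u ∈ G.neighborFinset v ∩ Cj,
          f u * ((Nat.choose (m - 1 - degCS u) k : ℝ)
                  * (Nat.choose (Cj.card - 1 - degj u) l : ℝ))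
            / ((Nat.choose (m - 1) k : ℝ) * (Nat.choose (Cj.card - 1) l : ℝ)))
      + (∑ u ∈ G.neighborFinset v \ Cj,
          f u * ((Nat.choose (m - 1 - degCS u) k : ℝ)
                  * (Nat.choose (Cj.card - degj u) l : ℝ))
            / ((Nat.choose (m - 1) k : ℝ) * (Nat.choose (Cj.card - 1) l : ℝ)))
      - f v * (1 - ((Nat.choose (m - 1 - degCS v) k : ℝ)
                  * (Nat.choose (Cj.card - 1 - degj v) l : ℝ))
            / ((Nat.choose (m - 1) k : ℝ) * (Nat.choose (Cj.card - 1) l : ℝ))) := by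
  have hν' : ∀ C, ν C = ∑ u ∈ G.groupNeighborFinset C, f u := hν
  have hvA : ∀ P ∈ CS.erase Cj, v ∉ P := fun P hP hvP => Finset.disjoint_left.1
    (hdisj Cj hCj P (mem_of_mem_erase hP) (ne_of_mem_erase hP).symm) hv hvP
  have hcomm : ∀ u, v ∈ G.closedNeighborFinset u →
      #{P ∈ CS.erase Cj | Disjoint (G.closedNeighborFinset u) P} = m - 1 - degCS u := by
    intro u hvu
    have hmeet : ¬ Disjoint (G.closedNeighborFinset u) Cj := not_disjoint_iff.2 ⟨v, hvu, hv⟩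
    rw [filter_erase, erase_eq_of_notMem (fun h => hmeet (mem_filter.1 h).2),
      card_filter_disjoint_closedNeighborFinset hdisj (hcover u), hm, hdegCS]
  have hnbr : ∀ u ∈ G.neighborFinset v, v ∈ G.closedNeighborFinset u := fun u hu =>
    mem_closedNeighborFinset_of_adj ((G.mem_neighborFinset v u).1 hu)
  simp only [hν']
  rw [sum_powersetCard_sum_groupNeighborFinset_insert_sub f _ _ k l hvA (notMem_erase v Cj),
    card_erase_of_mem hCj, ← hm, card_erase_of_mem hv, ← sum_inter_add_sum_sdiff _ Cj,
    hcomm v (self_mem_closedNeighborFinset v), erase_sdiff_of_mem (self_mem_closedNeighborFinset v),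
    card_sdiff_closedNeighborFinset_of_mem hv, ← hdegj]
  have hD : ((m - 1).choose k : ℝ) * ((#Cj - 1).choose l : ℝ) ≠ 0 :=
    mul_ne_zero (mod_cast (Nat.choose_pos hk).ne') (mod_cast (Nat.choose_pos hl).ne')
  rw [sub_div, add_div, sum_div, sum_div, mul_div_assoc, sub_div, div_self hD]
  congr 2 <;> refine sum_congr rfl fun u hu => ?_
  · obtain ⟨hvu, huCj⟩ := mem_inter.1 hu
    rw [hcomm u (hnbr u hvu), erase_sdiff_of_mem (hnbr u hvu),
      card_sdiff_closedNeighborFinset_of_mem huCj, ← hdegj]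
  · obtain ⟨hvu, huCj⟩ := mem_sdiff.1 hu
    rw [hcomm u (hnbr u hvu), erase_sdiff_of_mem (hnbr u hvu),
      card_sdiff_closedNeighborFinset_of_notMem huCj, ← hdegj]

/-- Expected marginal contribution of a node `v` to a random coalition `Q_T ∪ C`,
where `T` is a uniformly random size-`k` set of communities other than `v`'s own
community `C_j`, and `C` is a uniformly random size-`l` subset of `C_j \ {v}`, in the
weighted group degree game `ν(C) = Σ_{u ∈ N(C)} f(u)`. -/
theorem owen_degree_expected_marginal_contribution {V : Type*} [Fintype V] [DecidableEq V]
    (G : SimpleGraph V) [DecidableRel G.Adj] (f : V → ℝ)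
    (CS : Finset (Finset V))
    (hne : ∀ P ∈ CS, P.Nonempty)
    (hdisj : ∀ P ∈ CS, ∀ Q ∈ CS, P ≠ Q → Disjoint P Q)
    (hcover : ∀ u : V, ∃ P ∈ CS, u ∈ P)
    (ν : Finset V → ℝ)
    (hν : ∀ C : Finset V, ν C = ∑ u ∈ C.biUnion (fun c => G.neighborFinset c) \ C, f u)
    (degCS : V → ℕ)
    (hdegCS : ∀ u : V,
      degCS u = (CS.filter (fun P => u ∉ P ∧ ∃ w ∈ P, G.Adj u w)).card)
    (Cj : Finset V) (hCj : Cj ∈ CS) (v : V) (hv : v ∈ Cj)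
    (degj : V → ℕ) (hdegj : ∀ u : V, degj u = (G.neighborFinset u ∩ Cj).card)
    (m : ℕ) (hm : m = CS.card)
    (k l : ℕ) (hk : k ≤ m - 1) (hl : l ≤ Cj.card - 1) :
    (∑ T ∈ (CS.erase Cj).powersetCard k, ∑ C ∈ (Cj.erase v).powersetCard l,
        (ν (insert v (T.biUnion id ∪ C)) - ν (T.biUnion id ∪ C)))
      / ((Nat.choose (m - 1) k : ℝ) * (Nat.choose (Cj.card - 1) l : ℝ))
    = (∑ u ∈ G.neighborFinset v ∩ Cj,
          f u * ((Nat.choose (m - 1 - degCS u) k : ℝ)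
                  * (Nat.choose (Cj.card - 1 - degj u) l : ℝ))
            / ((Nat.choose (m - 1) k : ℝ) * (Nat.choose (Cj.card - 1) l : ℝ)))
      + (∑ u ∈ G.neighborFinset v \ Cj,
          f u * ((Nat.choose (m - 1 - degCS u) k : ℝ)
                  * (Nat.choose (Cj.card - degj u) l : ℝ))
            / ((Nat.choose (m - 1) k : ℝ) * (Nat.choose (Cj.card - 1) l : ℝ)))
      - f v * (1 - ((Nat.choose (m - 1 - degCS v) k : ℝ)
                  * (Nat.choose (Cj.card - 1 - degj v) l : ℝ))
            / ((Nat.choose (m - 1) k : ℝ) * (Nat.choose (Cj.card - 1) l : ℝ))) :=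
  owen_degree_expected_marginal_contribution_general G f CS hdisj hcover ν hν degCS hdegCS Cj hCj v
    hv degj hdegj m hm k l hk hl
end
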